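/- arXiv:1801.06972 — 4 statements merged into one kernel-verified Lean document; each statement's English description precedes it below -/
import Mathlib

section
/- Let h > 0, α > 0, and let i, j be nonnegative integers. Let S_i be the i-th sample-and-hold function on the grid of step h, i.e., the indicator of [i·h, (i+1)·h). Then the samples of its Riemann–Liouville fractional integral of order α at the grid nodes satisfy: J^α S_i(j·h) = 0 whenever j ≤ i, and J^α S_i(j·h) = (h^α / Γ(α+1)) · ((j−i)^α − (j−i−1)^α) whenever j > i; i.e., J^α S_i(j·h) = (h^α/Γ(α+1)) · ς_{j−i} with ς_k = k^α − (k−1)^α. -/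
/-- The `i`-th sample-and-hold function on the grid of step `h`:
the indicator of the interval `[i·h, (i+1)·h)`. -/
noncomputable def shf (h : ℝ) (i : ℕ) (t : ℝ) : ℝ :=
  if (i : ℝ) * h ≤ t ∧ t < ((i : ℝ) + 1) * h then 1 else 0

/-- The Riemann–Liouville fractional integral of order `α` of `f`,
`J^α f(t) = (1/Γ(α)) ∫₀ᵗ (t−τ)^{α−1} f(τ) dτ`. -/
noncomputable def rlIntegral (α : ℝ) (f : ℝ → ℝ) (t : ℝ) : ℝ :=
  (1 / Real.Gamma α) * ∫ τ in (0 : ℝ)..t, (t - τ) ^ (α - 1) * f τ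

/-!
Up to a null set, `shf h i` is the indicator of `(i·h, (i+1)·h]`, whose half-open side matches the
`Ioc` in which interval integrals live. Hence `J^α S_i(t)` vanishes when `t ≤ i·h`, and when the cell
lies in `[0, t]` it is `(1/Γ(α)) ∫_{ih}^{(i+1)h} (t − τ)^{α−1} dτ = ((t − ih)^α − (t − (i+1)h)^α) / Γ(α+1)`.
At `t = j·h` both powers factor as `h^α` times `(j − i)^α`, resp. `(j − i − 1)^α`.
-/

open MeasureTheory Set

lemma shf_eq_indicator (h : ℝ) (i : ℕ) :
    shf h i = (Ico ((i : ℝ) * h) ((i + 1) * h)).indicator 1 := by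
  ext t
  simp only [shf, indicator, mem_Ico, Pi.one_apply]

lemma shf_ae_eq_indicator_Ioc (h : ℝ) (i : ℕ) :
    shf h i =ᵐ[volume] (Ioc ((i : ℝ) * h) ((i + 1) * h)).indicator 1 := by
  rw [shf_eq_indicator]
  exact indicator_ae_eq_of_ae_eq_set Ico_ae_eq_Ioc

lemma rlIntegral_congr_ae {α t : ℝ} {f g : ℝ → ℝ} (hfg : f =ᵐ[volume] g) :
    rlIntegral α f t = rlIntegral α g t := by
  unfold rlIntegral
  congr 1
  refine intervalIntegral.integral_congr_ae ?_
  filter_upwards [hfg] with τ hτ _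
  rw [hτ]

lemma integral_sub_rpow_sub_one {α : ℝ} (hα : 0 < α) (a b t : ℝ) :
    ∫ τ in a..b, (t - τ) ^ (α - 1) = ((t - a) ^ α - (t - b) ^ α) / α := by
  rw [intervalIntegral.integral_comp_sub_left (fun x => x ^ (α - 1)),
    integral_rpow (Or.inl (by linarith))]
  simp

lemma rlIntegral_indicator_Ioc_eq_zero {α a b t : ℝ} (ha : 0 ≤ a) (hta : t ≤ a) :
    rlIntegral α ((Ioc a b).indicator 1) t = 0 := by
  suffices ∫ τ in (0 : ℝ)..t, (t - τ) ^ (α - 1) * (Ioc a b).indicator 1 τ = 0 by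
    rw [rlIntegral, this, mul_zero]
  refine (intervalIntegral.integral_congr fun τ hτ => ?_).trans intervalIntegral.integral_zero
  have : τ ∉ Ioc a b := fun hτab => (hτab.1.trans_le (hτ.2.trans (max_le ha hta))).false
  simp [this]

lemma rlIntegral_indicator_Ioc {α a b t : ℝ} (hα : 0 < α) (ha : 0 ≤ a) (hab : a ≤ b)
    (hbt : b ≤ t) :
    rlIntegral α ((Ioc a b).indicator 1) t =
      ((t - a) ^ α - (t - b) ^ α) / Real.Gamma (α + 1) := by
  have hIoc : Ioc 0 t ∩ Ioc a b = Ioc a b := inter_eq_right.2 (Ioc_subset_Ioc ha hbt)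
  have hint : ∫ τ in (0 : ℝ)..t, (t - τ) ^ (α - 1) * (Ioc a b).indicator 1 τ =
      ∫ τ in a..b, (t - τ) ^ (α - 1) := by
    have (τ : ℝ) : (t - τ) ^ (α - 1) * (Ioc a b).indicator 1 τ =
        (Ioc a b).indicator (fun τ => (t - τ) ^ (α - 1)) τ := by
      simp [indicator_apply]
    simp_rw [this]
    rw [intervalIntegral.integral_of_le (ha.trans (hab.trans hbt)),
      setIntegral_indicator measurableSet_Ioc, hIoc, intervalIntegral.integral_of_le hab]
  rw [rlIntegral, hint, integral_sub_rpow_sub_one hα, Real.Gamma_add_one hα.ne']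
  field_simp

/-- grid samples of the Riemann–Liouville fractional integral of
the `i`-th sample-and-hold function: `J^α S_i(j·h) = 0` for `j ≤ i`, and
`J^α S_i(j·h) = (h^α/Γ(α+1))·((j−i)^α − (j−i−1)^α)` for `j > i`. -/
theorem rlIntegral_shf_grid_samples (h α : ℝ) (hh : 0 < h) (hα : 0 < α) (i j : ℕ) :
    (j ≤ i → rlIntegral α (shf h i) ((j : ℝ) * h) = 0) ∧
    (i < j → rlIntegral α (shf h i) ((j : ℝ) * h) =
      (h ^ α / Real.Gamma (α + 1)) *
        (((j : ℝ) - (i : ℝ)) ^ α - ((j : ℝ) - (i : ℝ) - 1) ^ α)) := by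
  rw [rlIntegral_congr_ae (shf_ae_eq_indicator_Ioc h i)]
  refine ⟨fun hji => rlIntegral_indicator_Ioc_eq_zero (by positivity) ?_, fun hij => ?_⟩
  · exact mul_le_mul_of_nonneg_right (by exact_mod_cast hji) hh.le
  have hij : (i : ℝ) + 1 ≤ j := by exact_mod_cast hij
  rw [rlIntegral_indicator_Ioc hα (by positivity) (by nlinarith) (by nlinarith),
    show (j : ℝ) * h - i * h = (j - i) * h by ring,
    show (j : ℝ) * h - (i + 1) * h = (j - i - 1) * h by ring,
    Real.mul_rpow (by linarith) hh.le, Real.mul_rpow (by linarith) hh.le]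
  ring
end

section
/- Let h > 0, α > 0, and let i, j be nonnegative integers. Let T_i be the i-th right-handed triangular function on the grid of step h, i.e., T_i(t) = (t − i·h)/h for i·h ≤ t < (i+1)·h and 0 otherwise. Then the samples of its Riemann–Liouville fractional integral of order α at the grid nodes satisfy: J^α T_i(j·h) = 0 whenever j ≤ i, and J^α T_i(j·h) = (h^α / Γ(α+2)) · φ_{j−i} whenever j > i, where φ_k = k^{α+1} − (k−1)^α · (k + α) for integers k ≥ 1. -/
/-- The `i`-th right-handed triangular function on the grid of step `h`:
`T_i(t) = (t − i·h)/h` for `i·h ≤ t < (i+1)·h` and `0` otherwise. -/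
noncomputable def tfn (h : ℝ) (i : ℕ) (t : ℝ) : ℝ :=
  if (i : ℝ) * h ≤ t ∧ t < ((i : ℝ) + 1) * h then (t - (i : ℝ) * h) / h else 0

open MeasureTheory Set intervalIntegral

lemma tfn_eq_zero_of_le {h : ℝ} {i : ℕ} {τ : ℝ} (hτ : τ ≤ (i : ℝ) * h) :
    tfn h i τ = 0 := by
  unfold tfn
  split_ifs with hc
  · have : τ = (i : ℝ) * h := le_antisymm hτ hc.1
    simp [this]
  · rfl

lemma tfn_eq_zero_of_ge {h : ℝ} {i : ℕ} {τ : ℝ} (hτ : ((i : ℝ) + 1) * h ≤ τ) :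
    tfn h i τ = 0 := by
  unfold tfn
  split_ifs with hc
  · exact absurd hc.2 (not_lt.2 hτ)
  · rfl

lemma g_integrable {t a h α : ℝ} (hα : 0 < α) :
    IntervalIntegrable (fun τ => (t - τ) ^ (α - 1) * ((τ - a) / h)) volume a (a + h) := by
  have h1 : IntervalIntegrable (fun x : ℝ => x ^ (α - 1)) volume (t - (a + h)) (t - a) :=
    intervalIntegral.intervalIntegrable_rpow' (by linarith)
  have h2 := h1.comp_sub_left t
  simp only [sub_sub_cancel] at h2
  have hc : Continuous fun τ : ℝ => (τ - a) / h := by fun_prop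
  first
  | exact h2.mul_continuousOn hc.continuousOn
  | exact h2.symm.mul_continuousOn hc.continuousOn

lemma key_integral {t a h α : ℝ} (hh : 0 < h) (hα : 0 < α) (hta : a + h ≤ t) :
    ∫ τ in a..(a + h), (t - τ) ^ (α - 1) * ((τ - a) / h) =
      ((t - a) ^ (α + 1) - (t - (a + h)) ^ (α + 1) - (α + 1) * h * (t - (a + h)) ^ α) /
        (α * (α + 1) * h) := by
  set F : ℝ → ℝ := fun x =>
    (-(1 : ℝ) / (α * h)) * ((t - x) ^ α * (x - a)) +
      (-(1 : ℝ) / (α * (α + 1) * h)) * (t - x) ^ (α + 1) with hF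
  have c1 : Continuous fun x : ℝ => (t - x) ^ α :=
    (continuous_const.sub continuous_id).rpow_const fun x => Or.inr hα.le
  have c2 : Continuous fun x : ℝ => (t - x) ^ (α + 1) :=
    (continuous_const.sub continuous_id).rpow_const fun x => Or.inr (by linarith)
  have hcont : ContinuousOn F (Icc a (a + h)) := by
    apply Continuous.continuousOn
    fun_prop
  have hderiv : ∀ x ∈ Ioo a (a + h),
      HasDerivWithinAt F ((t - x) ^ (α - 1) * ((x - a) / h)) (Ioi x) x := by
    intro x hx
    have hpos : 0 < t - x := by linarith [hx.2]
    have d0 : HasDerivAt (fun x : ℝ => t - x) (-1) x := (hasDerivAt_id x).const_sub t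
    have d1 : HasDerivAt (fun x : ℝ => (t - x) ^ α) (-1 * α * (t - x) ^ (α - 1)) x :=
      d0.rpow_const (Or.inl hpos.ne')
    have d2 : HasDerivAt (fun x : ℝ => (t - x) ^ (α + 1))
        (-1 * (α + 1) * (t - x) ^ (α + 1 - 1)) x := d0.rpow_const (Or.inl hpos.ne')
    have hD := ((d1.mul ((hasDerivAt_id x).sub_const a)).const_mul (-(1 : ℝ) / (α * h))).add
      (d2.const_mul (-(1 : ℝ) / (α * (α + 1) * h)))
    simp only [id_eq] at hD
    have e1 : (t - x) ^ α = (t - x) ^ (α - 1) * (t - x) := by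
      rw [← Real.rpow_add_one hpos.ne', sub_add_cancel]
    have e2 : α + 1 - 1 = α := by ring
    rw [e2] at hD
    have : (-(1 : ℝ) / (α * h)) * (-1 * α * (t - x) ^ (α - 1) * (x - a) + (t - x) ^ α * 1) +
        (-(1 : ℝ) / (α * (α + 1) * h)) * (-1 * (α + 1) * (t - x) ^ α) =
        (t - x) ^ (α - 1) * ((x - a) / h) := by
      rw [e1]; field_simp; ring
    rw [this] at hD
    exact hD.hasDerivWithinAt
  rw [intervalIntegral.integral_eq_sub_of_hasDeriv_right_of_le (by linarith) hcont hderiv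
    (g_integrable hα)]
  have hα1 : α + 1 ≠ 0 := by positivity
  simp only [hF, add_sub_cancel_left, sub_self, mul_zero, zero_add]
  field_simp
  ring

/-- grid samples of the Riemann–Liouville fractional integral of
the `i`-th right-handed triangular function: `J^α T_i(j·h) = 0` for `j ≤ i`,
and `J^α T_i(j·h) = (h^α/Γ(α+2))·φ_{j−i}` for `j > i`, where
`φ_k = k^{α+1} − (k−1)^α·(k+α)`. -/
theorem rlIntegral_tfn_grid_samples (h α : ℝ) (hh : 0 < h) (hα : 0 < α) (i j : ℕ) :
    (j ≤ i → rlIntegral α (tfn h i) ((j : ℝ) * h) = 0) ∧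
    (i < j → rlIntegral α (tfn h i) ((j : ℝ) * h) =
      (h ^ α / Real.Gamma (α + 2)) *
        (((j : ℝ) - (i : ℝ)) ^ (α + 1) -
          ((j : ℝ) - (i : ℝ) - 1) ^ α * (((j : ℝ) - (i : ℝ)) + α))) := by
  constructor
  · intro hji
    have hji' : (j : ℝ) * h ≤ (i : ℝ) * h :=
      mul_le_mul_of_nonneg_right (by exact_mod_cast hji) hh.le
    unfold rlIntegral
    rw [intervalIntegral.integral_congr (g := fun _ => (0 : ℝ)) ?_, intervalIntegral.integral_zero,
      mul_zero]
    intro τ hτ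
    have h0 : (0 : ℝ) ≤ (j : ℝ) * h := by positivity
    rw [uIcc_of_le h0] at hτ
    have : tfn h i τ = 0 := tfn_eq_zero_of_le (le_trans hτ.2 hji')
    simp [this]
  · intro hij
    set t : ℝ := (j : ℝ) * h with ht
    set a : ℝ := (i : ℝ) * h with ha
    set b : ℝ := a + h with hb
    have hcast : (i : ℝ) + 1 ≤ (j : ℝ) := by exact_mod_cast hij
    have hab : a ≤ b := by simp [hb]; linarith
    have hbt : b ≤ t := by
      have : ((i : ℝ) + 1) * h ≤ (j : ℝ) * h := mul_le_mul_of_nonneg_right hcast hh.le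
      simp only [hb, ha, ht]; nlinarith
    have ha0 : 0 ≤ a := by positivity
    have hbeq : ((i : ℝ) + 1) * h = b := by simp [hb, ha]; ring
    set f : ℝ → ℝ := fun τ => (t - τ) ^ (α - 1) * tfn h i τ with hf
    set g : ℝ → ℝ := fun τ => (t - τ) ^ (α - 1) * ((τ - a) / h) with hg
    -- f = 0 on [0, a]
    have hf0 : EqOn f (fun _ => (0 : ℝ)) (uIcc 0 a) := by
      intro τ hτ
      rw [uIcc_of_le ha0] at hτ
      have : tfn h i τ = 0 := tfn_eq_zero_of_le hτ.2
      simp [hf, this]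
    -- f = 0 on [b, t]
    have hf3 : EqOn f (fun _ => (0 : ℝ)) (uIcc b t) := by
      intro τ hτ
      rw [uIcc_of_le hbt] at hτ
      have : tfn h i τ = 0 := tfn_eq_zero_of_ge (hbeq ▸ hτ.1)
      simp [hf, this]
    have int1 : IntervalIntegrable f volume 0 a := by
      rw [intervalIntegrable_iff]
      exact (integrableOn_zero).congr_fun
        (fun x hx => (hf0 (uIoc_subset_uIcc hx)).symm) measurableSet_uIoc
    have int3 : IntervalIntegrable f volume b t := by
      rw [intervalIntegrable_iff]
      exact (integrableOn_zero).congr_fun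
        (fun x hx => (hf3 (uIoc_subset_uIcc hx)).symm) measurableSet_uIoc
    -- f = g except at b on uIoc a b
    have hsub : {x | f x ≠ g x} ∩ uIoc a b ⊆ {b} := by
      intro x ⟨hx1, hx2⟩
      rw [uIoc_of_le hab] at hx2
      by_contra hxb
      have hxlt : x < b := lt_of_le_of_ne hx2.2 (by simpa using hxb)
      apply hx1
      have : tfn h i x = (x - a) / h := by
        unfold tfn
        rw [if_pos ⟨hx2.1.le, by rw [hbeq]; exact hxlt⟩]
      simp [hf, hg, this]
    have int2 : IntervalIntegrable f volume a b := by
      rw [intervalIntegrable_iff]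
      have hgint := (g_integrable (t := t) (a := a) (h := h) hα)
      rw [intervalIntegrable_iff] at hgint
      refine hgint.congr ?_
      rw [Filter.EventuallyEq, ae_iff, Measure.restrict_apply' measurableSet_uIoc]
      refine measure_mono_null ?_ (measure_singleton b)
      intro x hx
      exact hsub ⟨fun hne => hx.1 hne.symm, hx.2⟩
    have eq2 : ∫ τ in a..b, f τ = ∫ τ in a..b, g τ := by
      apply intervalIntegral.integral_congr_ae
      rw [ae_iff]
      refine measure_mono_null ?_ (measure_singleton b)
      intro x hx
      simp only [Set.mem_setOf_eq, not_forall] at hx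
      exact hsub ⟨hx.2, hx.1⟩
    have splitA : (∫ τ in (0:ℝ)..a, f τ) + ∫ τ in a..b, f τ = ∫ τ in (0:ℝ)..b, f τ :=
      intervalIntegral.integral_add_adjacent_intervals int1 int2
    have splitB : (∫ τ in (0:ℝ)..b, f τ) + ∫ τ in b..t, f τ = ∫ τ in (0:ℝ)..t, f τ :=
      intervalIntegral.integral_add_adjacent_intervals (int1.trans int2) int3
    have z1 : (∫ τ in (0:ℝ)..a, f τ) = 0 := by
      rw [intervalIntegral.integral_congr hf0]; simp
    have z3 : (∫ τ in b..t, f τ) = 0 := by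
      rw [intervalIntegral.integral_congr hf3]; simp
    have key := key_integral (t := t) (a := a) hh hα (by rw [← hb]; exact hbt)
    have main : (∫ τ in (0:ℝ)..t, f τ) =
        ((t - a) ^ (α + 1) - (t - b) ^ (α + 1) - (α + 1) * h * (t - b) ^ α) /
          (α * (α + 1) * h) := by
      rw [← splitB, ← splitA, z1, z3, zero_add, add_zero, eq2, ← hb] at *
      rw [key]
    -- now algebra
    set c : ℝ := (j : ℝ) - (i : ℝ) with hc
    have hc1 : 1 ≤ c := by simp [hc]; linarith
    have hta : t - a = c * h := by simp [ht, ha, hc]; ring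
    have htb : t - b = (c - 1) * h := by simp [ht, ha, hb, hc]; ring
    have hrw1 : (t - a) ^ (α + 1) = c ^ (α + 1) * h ^ (α + 1) := by
      rw [hta, Real.mul_rpow (by linarith) hh.le]
    have hrw2 : (t - b) ^ (α + 1) = (c - 1) ^ (α + 1) * h ^ (α + 1) := by
      rw [htb, Real.mul_rpow (by linarith) hh.le]
    have hrw3 : (t - b) ^ α = (c - 1) ^ α * h ^ α := by
      rw [htb, Real.mul_rpow (by linarith) hh.le]
    have hrw4 : (c - 1) ^ (α + 1) = (c - 1) ^ α * (c - 1) := by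
      rcases eq_or_lt_of_le hc1 with heq | hlt
      · rw [← heq]
        simp [Real.zero_rpow hα.ne', Real.zero_rpow (by positivity : α + 1 ≠ 0)]
      · rw [Real.rpow_add_one (by linarith)]
    have hrw5 : h ^ (α + 1) = h ^ α * h := Real.rpow_add_one hh.ne' α
    have hGamma : Real.Gamma (α + 2) = (α + 1) * α * Real.Gamma α := by
      rw [show α + 2 = (α + 1) + 1 by ring, Real.Gamma_add_one (by positivity),
        Real.Gamma_add_one hα.ne']
      ring
    have hGpos : 0 < Real.Gamma α := Real.Gamma_pos_of_pos hα
    unfold rlIntegral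
    rw [show (∫ τ in (0:ℝ)..t, (t - τ) ^ (α - 1) * tfn h i τ) = ∫ τ in (0:ℝ)..t, f τ from rfl,
      main, hGamma, hrw1, hrw2, hrw3, hrw4, hrw5]
    have hα1 : (0:ℝ) < α + 1 := by linarith
    field_simp
    ring
end

section
/- Let h > 0, α > 0, and let T_0 be the right-handed triangular function T_0(t) = t/h for 0 ≤ t < h and T_0(t) = 0 otherwise. Then for all t ≥ h, the Riemann–Liouville fractional integral of order α of T_0 satisfies J^α T_0(t) = (1/(h·Γ(α))) · [ t·(t^α − (t−h)^α)/α − (t^{α+1} − (t−h)^{α+1})/(α+1) ]. -/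
open MeasureTheory Set intervalIntegral

lemma tfn_zero_eq_indicator (h : ℝ) : tfn h 0 = (Ico 0 h).indicator (fun τ => τ / h) := by
  funext τ
  simp [tfn, indicator]

lemma intervalIntegral_mul_indicator_Ico {a h t : ℝ} (hah : a ≤ h) (hht : h ≤ t) (f g : ℝ → ℝ) :
    ∫ τ in a..t, f τ * (Ico a h).indicator g τ = ∫ τ in a..h, f τ * g τ := by
  simp_rw [← indicator_mul_right]
  have hset : Ioc a t ∩ Ico a h = Ioo a h := by
    ext τ
    simp only [mem_inter_iff, mem_Ioc, mem_Ico, mem_Ioo]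
    constructor
    · rintro ⟨⟨haτ, -⟩, -, hτh⟩
      exact ⟨haτ, hτh⟩
    · rintro ⟨haτ, hτh⟩
      exact ⟨⟨haτ, by linarith⟩, haτ.le, hτh⟩
  rw [integral_of_le (hah.trans hht), integral_of_le hah, setIntegral_indicator measurableSet_Ico,
    hset, integral_Ioc_eq_integral_Ioo]

lemma intervalIntegrable_sub_rpow {r : ℝ} (hr : -1 < r) (t a b : ℝ) :
    IntervalIntegrable (fun τ => (t - τ) ^ r) volume a b := by
  simpa using (intervalIntegrable_rpow' hr (a := t - a) (b := t - b)).comp_sub_left t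

lemma integral_sub_rpow {r : ℝ} (hr : -1 < r) (t a b : ℝ) :
    ∫ τ in a..b, (t - τ) ^ r = ((t - a) ^ (r + 1) - (t - b) ^ (r + 1)) / (r + 1) := by
  rw [integral_comp_sub_left (fun x => x ^ r), integral_rpow (Or.inl hr)]

lemma integral_sub_rpow_mul_self {α h t : ℝ} (hα : 0 < α) (hh : 0 ≤ h) (ht : h ≤ t) :
    ∫ τ in (0 : ℝ)..h, (t - τ) ^ (α - 1) * τ =
      t * (t ^ α - (t - h) ^ α) / α - (t ^ (α + 1) - (t - h) ^ (α + 1)) / (α + 1) := by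
  have hsplit : ∀ τ ∈ uIcc 0 h, (t - τ) ^ (α - 1) * τ = t * (t - τ) ^ (α - 1) - (t - τ) ^ α := by
    intro τ hτ
    rw [uIcc_of_le hh] at hτ
    have hpow : (t - τ) ^ α = (t - τ) ^ (α - 1) * (t - τ) := by
      rw [← Real.rpow_add_one' (by linarith [hτ.2]) (by linarith)]
      ring_nf
    rw [hpow]
    ring
  have hα' : -1 < α - 1 := by linarith
  rw [integral_congr hsplit, integral_sub ((intervalIntegrable_sub_rpow hα' t 0 h).const_mul t)
      (intervalIntegrable_sub_rpow (by linarith) t 0 h), intervalIntegral.integral_const_mul,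
    integral_sub_rpow hα', integral_sub_rpow (by linarith)]
  simp only [sub_zero, sub_add_cancel]
  ring

/-- for `t ≥ h`, the Riemann–Liouville fractional integral of
order `α` of the first right-handed triangular function `T_0` is
`J^α T_0(t) = (1/(h·Γ(α)))·[t·(t^α − (t−h)^α)/α − (t^{α+1} − (t−h)^{α+1})/(α+1)]`. -/
theorem rlIntegral_tfn_zero_tail (h α : ℝ) (hh : 0 < h) (hα : 0 < α) :
    ∀ t : ℝ, h ≤ t →
      rlIntegral α (tfn h 0) t =
        (1 / (h * Real.Gamma α)) *
          (t * (t ^ α - (t - h) ^ α) / α -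
            (t ^ (α + 1) - (t - h) ^ (α + 1)) / (α + 1)) := by
  intro t ht
  rw [rlIntegral, tfn_zero_eq_indicator, intervalIntegral_mul_indicator_Ico hh.le ht]
  simp_rw [mul_div_assoc']
  rw [intervalIntegral.integral_div, integral_sub_rpow_mul_self hα hh.le ht]
  ring
end

section
/- Let h > 0, α > 0, let m ≥ 1 be an integer, and let f : [0, m·h] → ℝ be continuous and affine on each subinterval [i·h, (i+1)·h] for i = 0,…,m−1 (i.e., f lies exactly in the span of the sample-and-hold and right-handed triangular functions on this grid). Then the hybrid-function approximation of J^α f given by the generalized one-shot operational matrices is exact at every grid node: for every integer j with 1 ≤ j ≤ m, (1/Γ(α)) ∫₀^{j·h} (j·h − τ)^{α−1} f(τ) dτ = (h^α/Γ(α+1)) · Σ_{i=0}^{j−1} f(i·h) · ς_{j−i} + (h^α/Γ(α+2)) · Σ_{i=0}^{j−1} (f((i+1)·h) − f(i·h)) · φ_{j−i}, where ς_k = k^α − (k−1)^α and φ_k = k^{α+1} − (k−1)^α(k+α). -/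
/-!
On the cell `[i h, (i+1) h]` the function `f` is affine, so the kernel `(j h - τ)^(α-1)` is
integrated against `1` and `τ - i h` only, both of which have closed-form antiderivatives.
Rescaling by `h` turns the two cell integrals into `h^α ς_{j-i} / α` and
`h^α φ_{j-i} / (α (α+1))`; summing over the cells below `j h` and using
`Γ(α+1) = α Γ(α)`, `Γ(α+2) = (α+1) α Γ(α)` gives the formula.
-/

open MeasureTheory intervalIntegral Set

namespace FractionalIntegral

/- The paper's `ς_k` and `φ_k`: the weights of the sample-and-hold and of the triangular part
of the one-shot operational matrices. -/
noncomputable def sigmaWeight (α k : ℝ) : ℝ := k ^ α - (k - 1) ^ α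

noncomputable def phiWeight (α k : ℝ) : ℝ := k ^ (α + 1) - (k - 1) ^ α * (k + α)

theorem intervalIntegrable_sub_rpow {r : ℝ} (hr : -1 < r) (a b c : ℝ) :
    IntervalIntegrable (fun τ => (c - τ) ^ r) volume a b := by
  simpa using (intervalIntegrable_rpow' (a := c - a) (b := c - b) hr).comp_sub_left c

theorem integral_sub_rpow {r : ℝ} (hr : -1 < r) (a b c : ℝ) :
    ∫ τ in a..b, (c - τ) ^ r = ((c - a) ^ (r + 1) - (c - b) ^ (r + 1)) / (r + 1) := by
  rw [integral_comp_sub_left (fun x => x ^ r) c, integral_rpow (Or.inl hr)]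

theorem integral_sub_rpow_mul_affine {α a b c : ℝ} (hα : 0 < α) (hac : a ≤ c) (hbc : b ≤ c)
    (A B : ℝ) :
    ∫ τ in a..b, (c - τ) ^ (α - 1) * (A + B * (τ - a)) =
      A * ((c - a) ^ α - (c - b) ^ α) / α +
        B * ((c - a) ^ (α + 1) - (c - b) ^ α * (c - a + α * (b - a))) / (α * (α + 1)) := by
  have hsplit : EqOn (fun τ => (c - τ) ^ (α - 1) * (A + B * (τ - a)))
      (fun τ => (A + B * (c - a)) * (c - τ) ^ (α - 1) - B * (c - τ) ^ α) (uIcc a b) := by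
    intro τ hτ
    have hpow := Real.rpow_add_one' (sub_nonneg.2 (hτ.2.trans (max_le hac hbc)))
      (show α - 1 + 1 ≠ 0 by simpa using hα.ne')
    rw [sub_add_cancel] at hpow
    simp only [hpow]
    ring
  have hint₁ := intervalIntegrable_sub_rpow (show -1 < α - 1 by linarith) a b c
  have hint₂ := intervalIntegrable_sub_rpow (show -1 < α by linarith) a b c
  rw [integral_congr hsplit, integral_sub (hint₁.const_mul _) (hint₂.const_mul _),
    intervalIntegral.integral_const_mul, intervalIntegral.integral_const_mul,
    integral_sub_rpow (by linarith),
    integral_sub_rpow (by linarith), sub_add_cancel,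
    Real.rpow_add_one' (sub_nonneg.2 hac) (by positivity),
    Real.rpow_add_one' (sub_nonneg.2 hbc) (by positivity)]
  field_simp
  ring

theorem integral_grid_cell {h α : ℝ} (hh : 0 < h) (hα : 0 < α) {i j : ℕ} (hij : i < j)
    (A B : ℝ) :
    ∫ τ in (i : ℝ) * h..((i : ℝ) + 1) * h,
        ((j : ℝ) * h - τ) ^ (α - 1) * (A + B * (τ - i * h) / h)
      = h ^ α * (A * sigmaWeight α (j - i) / α +
          B * phiWeight α (j - i) / (α * (α + 1))) := by
  have hij' : (i : ℝ) + 1 ≤ j := by exact_mod_cast hij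
  have hcell : ((i : ℝ) + 1) * h ≤ j * h := mul_le_mul_of_nonneg_right hij' hh.le
  simp_rw [mul_div_right_comm B]
  rw [integral_sub_rpow_mul_affine hα (by linarith) hcell,
    show (j : ℝ) * h - i * h = (j - i) * h by ring,
    show (j : ℝ) * h - (i + 1) * h = (j - i - 1) * h by ring,
    show ((i : ℝ) + 1) * h - i * h = h by ring,
    Real.mul_rpow (by linarith) hh.le, Real.mul_rpow (by linarith) hh.le,
    Real.mul_rpow (by linarith) hh.le, Real.rpow_add_one hh.ne']
  unfold sigmaWeight phiWeight
  field_simp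

theorem integral_grid_node {h α : ℝ} (hh : 0 < h) (hα : 0 < α) {m : ℕ} {f : ℝ → ℝ}
    (haff : ∀ i < m, ∀ t ∈ Icc ((i : ℝ) * h) (((i : ℝ) + 1) * h),
      f t = f ((i : ℝ) * h) +
        (f (((i : ℝ) + 1) * h) - f ((i : ℝ) * h)) * (t - (i : ℝ) * h) / h)
    {j : ℕ} (hjm : j ≤ m) :
    ∫ τ in (0 : ℝ)..(j : ℝ) * h, ((j : ℝ) * h - τ) ^ (α - 1) * f τ =
      h ^ α * ∑ i ∈ Finset.range j,
        (f (i * h) * sigmaWeight α (j - i) / α +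
          (f ((i + 1) * h) - f (i * h)) * phiWeight α (j - i) / (α * (α + 1))) := by
  have hcell : ∀ i < j, EqOn (fun τ => ((j : ℝ) * h - τ) ^ (α - 1) * f τ)
      (fun τ => ((j : ℝ) * h - τ) ^ (α - 1) *
        (f (i * h) + (f ((i + 1) * h) - f (i * h)) * (τ - i * h) / h))
      (uIcc ((i : ℝ) * h) (((i : ℝ) + 1) * h)) := by
    intro i hi τ hτ
    rw [uIcc_of_le (by nlinarith)] at hτ
    simp only [← haff i (hi.trans_le hjm) τ hτ]
  have hint : ∀ i < j,
      IntervalIntegrable (fun τ => ((j : ℝ) * h - τ) ^ (α - 1) * f τ) volume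
        ((i : ℝ) * h) (((i + 1 : ℕ) : ℝ) * h) := by
    intro i hi
    rw [Nat.cast_succ, intervalIntegrable_congr ((hcell i hi).mono uIoc_subset_uIcc)]
    exact (intervalIntegrable_sub_rpow (by linarith) _ _ _).mul_continuousOn (by fun_prop)
  have hsum := sum_integral_adjacent_intervals hint
  rw [Nat.cast_zero, zero_mul] at hsum
  rw [← hsum, Finset.mul_sum]
  refine Finset.sum_congr rfl fun i hi => ?_
  rw [Nat.cast_succ, integral_congr (hcell i (Finset.mem_range.1 hi)),
    integral_grid_cell hh hα (Finset.mem_range.1 hi)]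

end FractionalIntegral

open FractionalIntegral in
theorem oneshot_matrices_exact_on_grid_general
    (h α : ℝ) (hh : 0 < h) (hα : 0 < α) (m : ℕ)
    (f : ℝ → ℝ)
    (haff : ∀ i < m, ∀ t ∈ Set.Icc ((i : ℝ) * h) (((i : ℝ) + 1) * h),
      f t = f ((i : ℝ) * h) +
        (f (((i : ℝ) + 1) * h) - f ((i : ℝ) * h)) * (t - (i : ℝ) * h) / h) :
    ∀ j : ℕ, 1 ≤ j → j ≤ m →
      (1 / Real.Gamma α) *
          (∫ τ in (0 : ℝ)..((j : ℝ) * h), ((j : ℝ) * h - τ) ^ (α - 1) * f τ) =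
        (h ^ α / Real.Gamma (α + 1)) *
          (∑ i ∈ Finset.range j, f ((i : ℝ) * h) *
            (((j : ℝ) - (i : ℝ)) ^ α - ((j : ℝ) - (i : ℝ) - 1) ^ α)) +
        (h ^ α / Real.Gamma (α + 2)) *
          (∑ i ∈ Finset.range j, (f (((i : ℝ) + 1) * h) - f ((i : ℝ) * h)) *
            (((j : ℝ) - (i : ℝ)) ^ (α + 1) -
              ((j : ℝ) - (i : ℝ) - 1) ^ α * (((j : ℝ) - (i : ℝ)) + α))) := by
  intro j _ hjm
  have hΓ : Real.Gamma α ≠ 0 := (Real.Gamma_pos_of_pos hα).ne'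
  have hΓ₁ : Real.Gamma (α + 1) = α * Real.Gamma α := Real.Gamma_add_one hα.ne'
  have hΓ₂ : Real.Gamma (α + 2) = (α + 1) * (α * Real.Gamma α) := by
    rw [show α + 2 = α + 1 + 1 by ring, Real.Gamma_add_one (by positivity), hΓ₁]
  rw [integral_grid_node hh hα haff hjm, hΓ₁, hΓ₂, Finset.mul_sum, Finset.mul_sum,
    Finset.mul_sum, Finset.mul_sum, ← Finset.sum_add_distrib]
  refine Finset.sum_congr rfl fun i _ => ?_
  unfold sigmaWeight phiWeight
  field_simp

/-- for a continuous function `f` that is affine on each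
subinterval `[i·h, (i+1)·h]` of the grid (so that `f` lies exactly in the span
of the sample-and-hold and right-handed triangular functions), the
hybrid-function approximation of `J^α f` via the generalized one-shot
operational matrices is exact at every grid node `j·h`:
`J^α f(j·h) = (h^α/Γ(α+1))·Σ_{i<j} f(i·h)·ς_{j−i}
 + (h^α/Γ(α+2))·Σ_{i<j} (f((i+1)·h) − f(i·h))·φ_{j−i}`,
where `ς_k = k^α − (k−1)^α` and `φ_k = k^{α+1} − (k−1)^α·(k+α)`. -/
theorem oneshot_matrices_exact_on_grid
    (h α : ℝ) (hh : 0 < h) (hα : 0 < α) (m : ℕ) (hm : 1 ≤ m)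
    (f : ℝ → ℝ)
    (hfc : ContinuousOn f (Set.Icc (0 : ℝ) ((m : ℝ) * h)))
    (haff : ∀ i < m, ∀ t ∈ Set.Icc ((i : ℝ) * h) (((i : ℝ) + 1) * h),
      f t = f ((i : ℝ) * h) +
        (f (((i : ℝ) + 1) * h) - f ((i : ℝ) * h)) * (t - (i : ℝ) * h) / h) :
    ∀ j : ℕ, 1 ≤ j → j ≤ m →
      (1 / Real.Gamma α) *
          (∫ τ in (0 : ℝ)..((j : ℝ) * h), ((j : ℝ) * h - τ) ^ (α - 1) * f τ) =
        (h ^ α / Real.Gamma (α + 1)) *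
          (∑ i ∈ Finset.range j, f ((i : ℝ) * h) *
            (((j : ℝ) - (i : ℝ)) ^ α - ((j : ℝ) - (i : ℝ) - 1) ^ α)) +
        (h ^ α / Real.Gamma (α + 2)) *
          (∑ i ∈ Finset.range j, (f (((i : ℝ) + 1) * h) - f ((i : ℝ) * h)) *
            (((j : ℝ) - (i : ℝ)) ^ (α + 1) -
              ((j : ℝ) - (i : ℝ) - 1) ^ α * (((j : ℝ) - (i : ℝ)) + α))) :=
  oneshot_matrices_exact_on_grid_general h α hh hα m f haff
end
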